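/- Logarithmic mean reversiblization: Let p > 0, and define g : [0,∞) → [0,∞) by g(t) = ((t^p − 1)/(p·ln t))^{1/p} for t ∉ {0,1}, g(1) = 1, and g(0) = 0. Then g is a balancing function, i.e. g(t) = t·g(1/t) for all t > 0, and consequently for every L ∈ ℒ the logarithmic mean reversiblization C_{p,ln} := F_g belongs to ℒ(π). -/

import Mathlib

open Finset

noncomputable section

variable {X : Type*} [Fintype X] [DecidableEq X]

/-- Build a matrix with prescribed off-diagonal entries and diagonal entries
chosen so that every row sums to zero. -/
def rowZero (F : X → X → ℝ) : X → X → ℝ :=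
  fun x y => if x = y then -(∑ z ∈ Finset.univ.erase x, F x z) else F x y

/-- `L` is a Markov infinitesimal generator: nonnegative off-diagonal entries
and zero row sums. -/
def IsGen (L : X → X → ℝ) : Prop :=
  (∀ x y, x ≠ y → 0 ≤ L x y) ∧ (∀ x, ∑ y, L x y = 0)

/-- `L` is a `π`-reversible Markov generator, i.e. `L ∈ ℒ(π)`. -/
def IsRev (π : X → ℝ) (L : X → X → ℝ) : Prop :=
  IsGen L ∧ ∀ x y, π x * L x y = π y * L y x

/-- `π` is a probability distribution with full support. -/
def IsProb (π : X → ℝ) : Prop := (∀ x, 0 < π x) ∧ ∑ x, π x = 1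

/-- The `π`-dual `L_π` of `L`: off-diagonal entries `π(y)L(y,x)/π(x)`,
diagonal entries make row sums zero. -/
def dual (π : X → ℝ) (L : X → X → ℝ) : X → X → ℝ :=
  rowZero (fun x y => π y * L y x / π x)

/-- The `f`-divergence between generators: `Df f π M L = D_f(M‖L)`.
(The convention `0·f(a/0) = 0` holds automatically since `a/0 = 0` and
the factor `L x y = 0` kills the term.) -/
def Df (f : ℝ → ℝ) (π : X → ℝ) (M L : X → X → ℝ) : ℝ :=
  ∑ x, π x * ∑ y ∈ Finset.univ.erase x, L x y * f (M x y / L x y)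

/-- The locally-balanced transformation `F_g` of `L`: for `x ≠ y`,
`F_g(x,y) = L(x,y)` if `L(x,y) = L_π(x,y)`;
`F_g(x,y) = g(0)·L_π(x,y)` if `L(x,y) = 0` (and then `L_π(x,y) > 0`);
`F_g(x,y) = g(L_π(x,y)/L(x,y))·L(x,y)` otherwise;
diagonal entries make row sums zero. -/
def Fg (π : X → ℝ) (g : ℝ → ℝ) (L : X → X → ℝ) : X → X → ℝ :=
  rowZero (fun x y =>
    if L x y = dual π L x y then L x y
    else if L x y = 0 then g 0 * dual π L x y
    else g (dual π L x y / L x y) * L x y)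

/-- The balancing function of the logarithmic mean reversiblization `C_{p,ln}`:
`g(t) = ((t^p − 1)/(p·ln t))^{1/p}` for `t ∉ {0,1}`, `g(1) = 1`, `g(0) = 0`. -/
def gLog (p : ℝ) : ℝ → ℝ := fun t =>
  if t = 0 then 0
  else if t = 1 then 1
  else ((t ^ p - 1) / (p * Real.log t)) ^ (1 / p)

lemma rowZero_sum (F : X → X → ℝ) (x : X) : ∑ y, rowZero F x y = 0 := by
  rw [← Finset.add_sum_erase _ _ (Finset.mem_univ x)]
  have h1 : rowZero F x x = -(∑ z ∈ Finset.univ.erase x, F x z) := by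
    simp [rowZero]
  have h2 : ∑ y ∈ Finset.univ.erase x, rowZero F x y
      = ∑ y ∈ Finset.univ.erase x, F x y := by
    apply Finset.sum_congr rfl
    intro y hy
    have : x ≠ y := fun h => (Finset.mem_erase.mp hy).1 h.symm
    simp [rowZero, this]
  rw [h1, h2]; ring

lemma Fg_rev (π : X → ℝ) (hπ : IsProb π) (g : ℝ → ℝ)
    (hg0 : g 0 = 0) (hgnn : ∀ s, 0 ≤ s → 0 ≤ g s)
    (hbal : ∀ t : ℝ, 0 < t → g t = t * g (1 / t))
    (L : X → X → ℝ) (hL : IsGen L) : IsRev π (Fg π g L) := by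
  obtain ⟨hπpos, -⟩ := hπ
  obtain ⟨hLnn, -⟩ := hL
  have hdual : ∀ x y : X, x ≠ y → dual π L x y = π y * L y x / π x := by
    intro x y hxy; simp [dual, rowZero, hxy]
  have hFg : ∀ x y : X, x ≠ y → Fg π g L x y =
      (if L x y = dual π L x y then L x y
       else if L x y = 0 then g 0 * dual π L x y
       else g (dual π L x y / L x y) * L x y) := by
    intro x y hxy; simp [Fg, rowZero, hxy]
  constructor
  · constructor
    · intro x y hxy
      rw [hFg x y hxy]
      have hd : 0 ≤ dual π L x y := by
        rw [hdual x y hxy]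
        exact div_nonneg (mul_nonneg (hπpos y).le (hLnn y x (Ne.symm hxy))) (hπpos x).le
      split_ifs with h1 h2
      · exact hLnn x y hxy
      · rw [hg0]; simp
      · have hLpos : 0 < L x y := lt_of_le_of_ne (hLnn x y hxy) (Ne.symm h2)
        exact mul_nonneg (hgnn _ (div_nonneg hd hLpos.le)) hLpos.le
    · intro x; exact rowZero_sum _ x
  · intro x y
    rcases eq_or_ne x y with rfl | hxy
    · rfl
    rw [hFg x y hxy, hFg y x (Ne.symm hxy)]
    have hb := hdual x y hxy
    have hb' := hdual y x (Ne.symm hxy)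
    set a := L x y with hadef
    set a' := L y x with ha'def
    set b := dual π L x y with hbdef
    set b' := dual π L y x with hb'def
    have hpx := hπpos x
    have hpy := hπpos y
    have hann : 0 ≤ a := hLnn x y hxy
    have ha'nn : 0 ≤ a' := hLnn y x (Ne.symm hxy)
    have key : π x * b = π y * a' := by
      rw [hb]; field_simp
    have key' : π y * b' = π x * a := by
      rw [hb']; field_simp
    by_cases h1 : a = b
    · have h1' : a' = b' := by
        have h : π y * a' = π y * b' := by rw [← key, ← h1, key']
        exact mul_left_cancel₀ hpy.ne' h
      rw [if_pos h1, if_pos h1', h1, key]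
    · rw [if_neg h1]
      by_cases h2 : a = 0
      · rw [if_pos h2, hg0, zero_mul, mul_zero]
        have hb'0 : b' = 0 := by rw [hb', h2]; simp
        have ha'0 : a' ≠ 0 := by
          intro h
          apply h1
          rw [h2, hb, h]; simp
        have ha'ne : a' ≠ b' := by rw [hb'0]; exact ha'0
        rw [if_neg ha'ne, if_neg ha'0, hb'0, zero_div, hg0, zero_mul, mul_zero]
      · rw [if_neg h2]
        have hapos : 0 < a := lt_of_le_of_ne hann (Ne.symm h2)
        have ha'ne : a' ≠ b' := by
          intro h
          apply h1
          have hh : π x * b = π y * b' := by rw [key, h]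
          rw [key'] at hh
          exact (mul_left_cancel₀ hpx.ne' hh).symm
        rw [if_neg ha'ne]
        by_cases h3 : a' = 0
        · rw [if_pos h3, hg0, zero_mul, mul_zero]
          have hb0 : b = 0 := by rw [hb, h3]; simp
          rw [hb0, zero_div, hg0, zero_mul, mul_zero]
        · rw [if_neg h3]
          have ha'pos : 0 < a' := lt_of_le_of_ne ha'nn (Ne.symm h3)
          have hbpos : 0 < b := by
            rw [hb]; exact div_pos (mul_pos hpy ha'pos) hpx
          have hg := hbal (b / a) (div_pos hbpos hapos)
          have hinv : 1 / (b / a) = a / b := one_div_div b a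
          have hratio : b' / a' = a / b := by
            rw [hb', hb]
            field_simp
          rw [hratio, hg, hinv]
          have hstep : π x * (b / a * g (a / b) * a) = (π x * b) * g (a / b) := by
            field_simp
          rw [hstep, key]; ring

lemma gLog_zero (p : ℝ) : gLog p 0 = 0 := by simp [gLog]

lemma gLog_base_nonneg {p t : ℝ} (hp : 0 < p) (ht : 0 < t) (ht1 : t ≠ 1) :
    0 ≤ (t ^ p - 1) / (p * Real.log t) := by
  rcases lt_or_gt_of_ne ht1 with h | h
  · have h1 : t ^ p < 1 := Real.rpow_lt_one ht.le h hp
    have h2 : Real.log t < 0 := Real.log_neg ht h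
    rw [div_nonneg_iff]
    right
    constructor
    · linarith
    · nlinarith
  · have h1 : 1 < t ^ p := Real.one_lt_rpow_iff_of_pos ht |>.mpr (Or.inl ⟨h, hp⟩)
    have h2 : 0 < Real.log t := Real.log_pos h
    apply div_nonneg
    · linarith
    · positivity

lemma gLog_nonneg {p : ℝ} (hp : 0 < p) {s : ℝ} (hs : 0 ≤ s) : 0 ≤ gLog p s := by
  unfold gLog
  split_ifs with h0 h1
  · exact le_refl 0
  · norm_num
  · exact Real.rpow_nonneg
      (gLog_base_nonneg hp (lt_of_le_of_ne hs (Ne.symm h0)) h1) _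

lemma gLog_balance {p : ℝ} (hp : 0 < p) {t : ℝ} (ht : 0 < t) :
    gLog p t = t * gLog p (1 / t) := by
  rcases eq_or_ne t 1 with rfl | ht1
  · norm_num [gLog]
  · have htne : t ≠ 0 := ht.ne'
    have hinvne : (1 : ℝ) / t ≠ 0 := one_div_ne_zero htne
    have hinv1 : (1 : ℝ) / t ≠ 1 := by
      intro h
      apply ht1
      field_simp at h
      exact h.symm
    unfold gLog
    rw [if_neg htne, if_neg ht1, if_neg hinvne, if_neg hinv1]
    have hT : 0 < t ^ p := Real.rpow_pos_of_pos ht p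
    have hlog : Real.log t ≠ 0 := by
      intro h
      rcases Real.log_eq_zero.mp h with h | h | h
      · exact htne h
      · exact ht1 h
      · linarith
    have hA : 0 ≤ (t ^ p - 1) / (p * Real.log t) := gLog_base_nonneg hp ht ht1
    have h1 : ((1 / t) ^ p - 1) / (p * Real.log (1 / t))
        = (t ^ p)⁻¹ * ((t ^ p - 1) / (p * Real.log t)) := by
      rw [one_div, Real.inv_rpow ht.le, Real.log_inv]
      field_simp
      ring
    rw [h1, Real.mul_rpow (inv_nonneg.mpr hT.le) hA]
    have h2 : ((t ^ p)⁻¹ : ℝ) ^ (1 / p) = t⁻¹ := by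
      rw [← Real.rpow_neg ht.le, ← Real.rpow_mul ht.le]
      rw [show -p * (1 / p) = -1 by field_simp]
      rw [Real.rpow_neg ht.le, Real.rpow_one]
    rw [h2, ← mul_assoc, mul_inv_cancel₀ htne, one_mul]


/-- **Logarithmic mean reversiblization** (Theorem 4.2): for `p > 0`,
`gLog p` is a balancing function, i.e. `g(t) = t·g(1/t)` for all `t > 0`, and
consequently for every `L ∈ ℒ` the logarithmic mean reversiblization
`C_{p,ln} = F_g` belongs to `ℒ(π)`. -/
theorem log_mean_reversiblization (π : X → ℝ) (hπ : IsProb π)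
    (p : ℝ) (hp : 0 < p) :
    (∀ t : ℝ, 0 < t → gLog p t = t * gLog p (1 / t)) ∧
    (∀ L : X → X → ℝ, IsGen L → IsRev π (Fg π (gLog p) L)) := by
  refine ⟨fun t ht => gLog_balance hp ht, fun L hL =>
    Fg_rev π hπ _ (gLog_zero p) (fun s hs => gLog_nonneg hp hs)
      (fun t ht => gLog_balance hp ht) L hL⟩


end
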